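/- Define c : ℕ → ℕ by c(1) = 0, c(2n) = 2·c(n), c(2n+1) = c(n+1) + c(n) + 1. Let s = 2^{j+1} − (2t+1) be odd, with j = ⌊log₂ s⌋ and 0 ≤ t < 2^{j−1}. Then for every m ≥ 0, c(2m+1+s) + c(2m+1) + s = c(4m+2+s) holds if and only if either m = 2^j·p + t for some p ≥ 1, or s = 1 and m = 0. -/

import Mathlib

/-! Write `D(a, b) = c a + c b + (b - a) - c (a + b)` for the defect of the split `(a, b)`.
It is nonnegative for `1 ≤ a ≤ b`, and the recurrence writes the defect of a split of `2n` or
`2n + 1` as a sum of defects of splits of `n` and `n + 1` (plus `2` when both parts are odd).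
Halving repeatedly shows that for `e ≤ 2^k < 2e` and `m ≥ 1` the split `(m, m + e)` has zero
defect exactly when `2^k ≤ m` and `m ≡ 0` or `m ≡ -e (mod 2^k)`. The equation of the theorem
says that the split `(2m + 1, 2m + 1 + s)` has zero defect, and `s ≤ 2^(j+1) < 2s` unless
`s = 1`. -/

theorem Nat.two_mul_add_one_mod_two_mul (a K : ℕ) :
    (2 * a + 1) % (2 * K) = 2 * (a % K) + 1 := by
  rw [Nat.mod_mul, show (2 * a + 1) / 2 = a by omega]
  omega

theorem Nat.mod_two_mul_eq_or (a f : ℕ) : a % (2 * f) = a % f ∨ a % (2 * f) = a % f + f := by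
  rw [mul_comm, Nat.mod_mul]
  rcases Nat.mod_two_eq_zero_or_one (a / f) with h | h <;> simp [h]

theorem Nat.add_one_mod_eq_or (a K : ℕ) :
    (a + 1) % K = a % K + 1 ∨ (a % K + 1 = K ∧ (a + 1) % K = 0) := by
  rcases Nat.eq_zero_or_pos K with rfl | hK
  · simp
  have h : (a + 1) % K = (a % K + 1) % K := by
    conv_lhs => rw [← Nat.mod_add_div a K, add_right_comm, Nat.add_mul_mod_self_left]
  rcases Nat.lt_or_ge (a % K + 1) K with hlt | hge
  · exact Or.inl (by rw [h, Nat.mod_eq_of_lt hlt])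
  · have heq : a % K + 1 = K := le_antisymm (Nat.mod_lt a hK) hge
    exact Or.inr ⟨heq, by rw [h, heq, Nat.mod_self]⟩

theorem Nat.le_and_mod_eq_iff {K m t : ℕ} (ht : t < K) :
    K ≤ m ∧ m % K = t ↔ ∃ p, 1 ≤ p ∧ m = K * p + t := by
  constructor
  · rintro ⟨hKm, rfl⟩
    exact ⟨m / K, (Nat.one_le_div_iff (by omega)).2 hKm, (Nat.div_add_mod m K).symm⟩
  · rintro ⟨p, hp, rfl⟩
    refine ⟨Nat.le_add_right_of_le (Nat.le_mul_of_pos_right K hp), ?_⟩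
    rw [Nat.mul_add_mod, Nat.mod_eq_of_lt ht]

structure IsMinColless (c : ℕ → ℕ) : Prop where
  one : c 1 = 0
  two_mul : ∀ n, 1 ≤ n → c (2 * n) = 2 * c n
  two_mul_add_one : ∀ n, 1 ≤ n → c (2 * n + 1) = c (n + 1) + c n + 1

def collessDefect (c : ℕ → ℕ) (a b : ℕ) : ℤ := c a + c b + ((b : ℤ) - a) - c (a + b)

def DefectZeroCriterion (c : ℕ → ℕ) (e : ℕ) : Prop :=
  ∀ k m, 1 ≤ m → e ≤ 2 ^ k → 2 ^ k < 2 * e →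
    (collessDefect c m (m + e) = 0 ↔ 2 ^ k ≤ m ∧ (m % 2 ^ k = 0 ∨ m % 2 ^ k + e = 2 ^ k))

namespace IsMinColless

variable {c : ℕ → ℕ} {a b : ℕ}

theorem defect_self (hc : IsMinColless c) (ha : 1 ≤ a) : collessDefect c a a = 0 := by
  rw [collessDefect, ← _root_.two_mul a, hc.two_mul a ha]
  push_cast
  ring

theorem defect_add_one (hc : IsMinColless c) (ha : 1 ≤ a) :
    collessDefect c a (a + 1) = 0 := by
  rw [collessDefect, show a + (a + 1) = 2 * a + 1 by ring, hc.two_mul_add_one a ha]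
  push_cast
  ring

theorem defect_two_mul_two_mul (hc : IsMinColless c) (ha : 1 ≤ a) (hb : 1 ≤ b) :
    collessDefect c (2 * a) (2 * b) = 2 * collessDefect c a b := by
  simp only [collessDefect, ← mul_add, hc.two_mul a ha, hc.two_mul b hb,
    hc.two_mul (a + b) (by omega)]
  push_cast
  ring

theorem defect_two_mul_two_mul_add_one (hc : IsMinColless c) (ha : 1 ≤ a) (hb : 1 ≤ b) :
    collessDefect c (2 * a) (2 * b + 1) = collessDefect c a b + collessDefect c a (b + 1) := by
  simp only [collessDefect, ← add_assoc, ← mul_add, hc.two_mul a ha, hc.two_mul_add_one b hb,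
    hc.two_mul_add_one (a + b) (by omega)]
  push_cast
  ring

theorem defect_two_mul_add_one_two_mul (hc : IsMinColless c) (ha : 1 ≤ a) (hb : 1 ≤ b) :
    collessDefect c (2 * a + 1) (2 * b) = collessDefect c a b + collessDefect c (a + 1) b := by
  simp only [collessDefect, show 2 * a + 1 + 2 * b = 2 * (a + b) + 1 by ring,
    show a + 1 + b = a + b + 1 by ring, hc.two_mul_add_one a ha, hc.two_mul b hb,
    hc.two_mul_add_one (a + b) (by omega)]
  push_cast
  ring

theorem defect_two_mul_add_one_two_mul_add_one (hc : IsMinColless c) (ha : 1 ≤ a)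
    (hb : 1 ≤ b) :
    collessDefect c (2 * a + 1) (2 * b + 1) =
      collessDefect c a (b + 1) + collessDefect c (a + 1) b + 2 := by
  simp only [collessDefect, show 2 * a + 1 + (2 * b + 1) = 2 * (a + b + 1) by ring,
    show a + 1 + b = a + b + 1 by ring, ← add_assoc, hc.two_mul_add_one a ha,
    hc.two_mul_add_one b hb, hc.two_mul (a + b + 1) (by omega)]
  push_cast
  ring

theorem defect_one_two_mul (hc : IsMinColless c) (hb : 1 ≤ b) :
    collessDefect c 1 (2 * b) = collessDefect c 1 b + (b - 1) := by
  simp only [collessDefect, add_comm 1, hc.one, hc.two_mul b hb, hc.two_mul_add_one b hb]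
  push_cast
  ring

theorem defect_one_two_mul_add_one (hc : IsMinColless c) (hb : 1 ≤ b) :
    collessDefect c 1 (2 * b + 1) = collessDefect c 1 b + b + 2 := by
  simp only [collessDefect, add_comm 1, show 2 * b + 1 + 1 = 2 * (b + 1) by ring, hc.one,
    hc.two_mul (b + 1) (by omega), hc.two_mul_add_one b hb]
  push_cast
  ring

theorem defect_nonneg (hc : IsMinColless c) (ha : 1 ≤ a) (hab : a ≤ b) :
    0 ≤ collessDefect c a b := by
  induction b using Nat.strong_induction_on generalizing a with
  | _ b ih =>
  have ih' : ∀ x y, y < b → 1 ≤ x → x ≤ y → 0 ≤ collessDefect c x y :=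
    fun x y hy hx hxy ↦ ih y hy hx hxy
  rcases hab.eq_or_lt with rfl | hab
  · exact (hc.defect_self ha).ge
  obtain ⟨b, rfl | rfl⟩ := Nat.even_or_odd' b <;>
    obtain ⟨a, rfl | rfl⟩ := Nat.even_or_odd' a
  · rw [hc.defect_two_mul_two_mul (by omega) (by omega)]
    have := ih' a b (by omega) (by omega) (by omega)
    omega
  · rcases Nat.eq_zero_or_pos a with rfl | ha
    · rw [hc.defect_one_two_mul (by omega)]
      have := ih' 1 b (by omega) le_rfl (by omega)
      omega
    rw [hc.defect_two_mul_add_one_two_mul ha (by omega)]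
    have := ih' a b (by omega) ha (by omega)
    have := ih' (a + 1) b (by omega) (by omega) (by omega)
    omega
  · rw [hc.defect_two_mul_two_mul_add_one (by omega) (by omega)]
    have := ih' a b (by omega) (by omega) (by omega)
    have := ih' a (b + 1) (by omega) (by omega) (by omega)
    omega
  · rcases Nat.eq_zero_or_pos a with rfl | ha
    · rw [hc.defect_one_two_mul_add_one (by omega)]
      have := ih' 1 b (by omega) le_rfl (by omega)
      omega
    rw [hc.defect_two_mul_add_one_two_mul_add_one ha (by omega)]
    have := ih' a (b + 1) (by omega) ha (by omega)
    have := ih' (a + 1) b (by omega) (by omega) (by omega)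
    omega

theorem defect_one_pos (hc : IsMinColless c) (hb : 3 ≤ b) : 0 < collessDefect c 1 b := by
  obtain ⟨b, rfl | rfl⟩ := Nat.even_or_odd' b
  · rw [hc.defect_one_two_mul (by omega)]
    have := hc.defect_nonneg le_rfl (by omega : 1 ≤ b)
    omega
  · rw [hc.defect_one_two_mul_add_one (by omega)]
    have := hc.defect_nonneg le_rfl (by omega : 1 ≤ b)
    omega

end IsMinColless

/-- When `2^k = 2f` the criterion for `f` is applied with `k - 1`, and `x % 2^k ∈ {0, f}` is
the same as `f ∣ x`. -/
theorem DefectZeroCriterion.defect_eq_zero_iff_of_lt_of_le_two_mul {c : ℕ → ℕ} {f k x : ℕ}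
    (hf : DefectZeroCriterion c f) (hfK : f < 2 ^ k) (hKf : 2 ^ k ≤ 2 * f) (hx : 1 ≤ x) :
    collessDefect c x (x + f) = 0 ↔
      (2 ^ k ≤ x ∨ 2 ^ k = 2 * f) ∧ (x % 2 ^ k = 0 ∨ x % 2 ^ k + f = 2 ^ k) := by
  rcases hKf.lt_or_eq with hlt | heq
  · rw [hf k x hx hfK.le hlt]
    omega
  rcases k with _ | k
  · rw [pow_zero] at heq
    omega
  obtain rfl : f = 2 ^ k := by rw [pow_succ] at heq; omega
  rw [hf k x hx le_rfl (by rw [pow_succ] at hfK; omega), pow_succ, mul_comm]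
  have := Nat.mod_two_mul_eq_or x (2 ^ k)
  have := Nat.mod_lt x (Nat.two_pow_pos k)
  have := @Nat.mod_eq_of_lt x (2 ^ k)
  omega

namespace IsMinColless

variable {c : ℕ → ℕ}

theorem defectZeroCriterion_one (hc : IsMinColless c) : DefectZeroCriterion c 1 := by
  intro k m hm _ hk
  obtain rfl : k = 0 := by
    by_contra hk0
    have := Nat.pow_le_pow_right two_pos (Nat.one_le_iff_ne_zero.2 hk0)
    omega
  simp [hc.defect_add_one hm, hm, Nat.mod_one]

theorem defectZeroCriterion_two_mul (hc : IsMinColless c) {f : ℕ}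
    (hf : DefectZeroCriterion c f) (hf1 : 1 ≤ f) : DefectZeroCriterion c (2 * f) := by
  intro k m hm hek hke
  rcases k with _ | k
  · omega
  rw [pow_succ'] at hek hke ⊢
  have hr := Nat.mod_lt m (by positivity : 0 < 2 * 2 ^ k)
  obtain ⟨a, rfl | rfl⟩ := Nat.even_or_odd' m
  · rw [← mul_add, hc.defect_two_mul_two_mul (by omega) (by omega), Nat.mul_mod_mul_left,
      ← pow_succ']
    have := hf k a (by omega) (by omega) (by omega)
    omega
  rcases Nat.eq_zero_or_pos a with rfl | ha
  · have := hc.defect_one_pos (b := 1 + 2 * f) (by omega)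
    simp only [Nat.mul_zero, Nat.zero_add]
    omega
  rw [show 2 * a + 1 + 2 * f = 2 * (a + f) + 1 by ring,
    hc.defect_two_mul_add_one_two_mul_add_one ha (by omega), Nat.two_mul_add_one_mod_two_mul]
  have hD₁ := hc.defect_nonneg (a := a) (b := a + f + 1) ha (by omega)
  have hD₂ := hc.defect_nonneg (a := a + 1) (b := a + f) (by omega) (by omega)
  omega

theorem defectZeroCriterion_two_mul_add_one (hc : IsMinColless c) {f : ℕ}
    (hf : DefectZeroCriterion c f) (hf' : DefectZeroCriterion c (f + 1)) (hf1 : 1 ≤ f) :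
    DefectZeroCriterion c (2 * f + 1) := by
  intro k m hm hek hke
  rcases k with _ | k
  · omega
  rw [pow_succ'] at hek hke ⊢
  have hr := Nat.mod_lt (m / 2) (Nat.two_pow_pos k)
  obtain ⟨a, rfl | rfl⟩ := Nat.even_or_odd' m
  · rw [show 2 * a / 2 = a by omega] at hr
    rw [show 2 * a + (2 * f + 1) = 2 * (a + f) + 1 by ring,
      hc.defect_two_mul_two_mul_add_one (by omega) (by omega), Nat.mul_mod_mul_left]
    have hD₁ := hc.defect_nonneg (a := a) (b := a + f) (by omega) (by omega)
    have hD₂ := hc.defect_nonneg (a := a) (b := a + f + 1) (by omega) (by omega)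
    have hcrit₁ := hf.defect_eq_zero_iff_of_lt_of_le_two_mul (k := k) (x := a)
      (by omega) (by omega) (by omega)
    have hcrit₂ := hf' k a (by omega) (by omega) (by omega)
    rw [← add_assoc] at hcrit₂
    omega
  rcases Nat.eq_zero_or_pos a with rfl | ha
  · have := hc.defect_one_pos (b := 1 + (2 * f + 1)) (by omega)
    simp only [Nat.mul_zero, Nat.zero_add]
    omega
  rw [show (2 * a + 1) / 2 = a by omega] at hr
  rw [show 2 * a + 1 + (2 * f + 1) = 2 * (a + f + 1) by ring,
    hc.defect_two_mul_add_one_two_mul ha (by omega), Nat.two_mul_add_one_mod_two_mul]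
  have hD₁ := hc.defect_nonneg (a := a) (b := a + f + 1) ha (by omega)
  have hD₂ := hc.defect_nonneg (a := a + 1) (b := a + f + 1) (by omega) (by omega)
  have hcrit₁ := hf' k a ha (by omega) (by omega)
  have hcrit₂ := hf.defect_eq_zero_iff_of_lt_of_le_two_mul (k := k) (x := a + 1)
    (by omega) (by omega) (by omega)
  rw [← add_assoc] at hcrit₁
  rw [add_right_comm] at hcrit₂
  have hsucc := Nat.add_one_mod_eq_or a (2 ^ k)
  omega

theorem defectZeroCriterion (hc : IsMinColless c) (e : ℕ) : DefectZeroCriterion c e := by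
  induction e using Nat.strong_induction_on with
  | _ e ih =>
  obtain ⟨f, rfl | rfl⟩ := Nat.even_or_odd' e
  · rcases Nat.eq_zero_or_pos f with rfl | hf
    · intro k m _ _ hk
      omega
    exact hc.defectZeroCriterion_two_mul (ih f (by omega)) hf
  · rcases Nat.eq_zero_or_pos f with rfl | hf
    · exact hc.defectZeroCriterion_one
    exact hc.defectZeroCriterion_two_mul_add_one (ih f (by omega)) (ih (f + 1) (by omega)) hf

end IsMinColless

theorem minColless_eq_odd_odd_case_general (c : ℕ → ℕ) (h1 : c 1 = 0)
    (heven : ∀ n : ℕ, 1 ≤ n → c (2 * n) = 2 * c n)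
    (hodd : ∀ n : ℕ, 1 ≤ n → c (2 * n + 1) = c (n + 1) + c n + 1)
    (s j t : ℕ)
    (hst : s + (2 * t + 1) = 2 ^ (j + 1)) (ht : t < 2 ^ (j - 1)) :
    ∀ m : ℕ,
      (c (2 * m + 1 + s) + c (2 * m + 1) + s = c (4 * m + 2 + s) ↔
        (∃ p : ℕ, 1 ≤ p ∧ m = 2 ^ j * p + t) ∨ (s = 1 ∧ m = 0)) := by
  intro m
  have hc : IsMinColless c := ⟨h1, heven, hodd⟩
  have hdefect : c (2 * m + 1 + s) + c (2 * m + 1) + s = c (4 * m + 2 + s) ↔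
      collessDefect c (2 * m + 1) (2 * m + 1 + s) = 0 := by
    rw [collessDefect, show 2 * m + 1 + (2 * m + 1 + s) = 4 * m + 2 + s by ring]
    omega
  rw [hdefect]
  rcases j with _ | j
  · obtain ⟨rfl, rfl⟩ : t = 0 ∧ s = 1 := by simp at ht hst; omega
    simp only [hc.defect_add_one (by omega : 1 ≤ 2 * m + 1), true_iff, true_and, pow_zero,
      one_mul, add_zero]
    rcases Nat.eq_zero_or_pos m with hm | hm
    · exact Or.inr hm
    · exact Or.inl ⟨m, hm, rfl⟩
  rw [Nat.add_sub_cancel] at ht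
  have hpow : 2 ^ (j + 1 + 1) = 2 * 2 ^ (j + 1) := pow_succ' 2 (j + 1)
  have hpow' : 2 ^ (j + 1) = 2 * 2 ^ j := pow_succ' 2 j
  rw [hc.defectZeroCriterion s (j + 1 + 1) (2 * m + 1) (by omega) (by omega) (by omega), hpow,
    Nat.two_mul_add_one_mod_two_mul, ← Nat.le_and_mod_eq_iff (by omega)]
  have := Nat.mod_lt m (Nat.two_pow_pos (j + 1))
  omega

theorem minColless_eq_odd_odd_case (c : ℕ → ℕ) (h1 : c 1 = 0)
    (heven : ∀ n : ℕ, 1 ≤ n → c (2 * n) = 2 * c n)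
    (hodd : ∀ n : ℕ, 1 ≤ n → c (2 * n + 1) = c (n + 1) + c n + 1)
    (s j t : ℕ) (hsodd : Odd s) (hj : j = Nat.log 2 s)
    (hst : s + (2 * t + 1) = 2 ^ (j + 1)) (ht : t < 2 ^ (j - 1)) :
    ∀ m : ℕ,
      (c (2 * m + 1 + s) + c (2 * m + 1) + s = c (4 * m + 2 + s) ↔
        (∃ p : ℕ, 1 ≤ p ∧ m = 2 ^ j * p + t) ∨ (s = 1 ∧ m = 0)) :=
  minColless_eq_odd_odd_case_general c h1 heven hodd s j t hst ht
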